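/- arXiv:2310.03366 — 4 statements merged into one kernel-verified Lean document; each statement's English description precedes it below -/
import Mathlib

section
/- If a lattice L satisfies Whitman's condition (W), then its ideal lattice Id(L) also satisfies (W). -/
/-!
Let `S ⊓ T ≤ U ⊔ V` with `S, T ⊄ U ⊔ V` and `S ⊓ T ⊄ U`, witnessed by `s ∈ S`, `t ∈ T` and
`w ∈ S ⊓ T`. For `x ∈ S ⊓ T`, put `a = w ⊔ x`; then `(s ⊔ a) ⊓ (t ⊔ a) ∈ S ⊓ T ≤ U ⊔ V`, i.e. it lies
below some `u ⊔ v` with `u ∈ U`, `v ∈ V`. Whitman's condition in `L` for this inequality leaves only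
`(s ⊔ a) ⊓ (t ⊔ a) ≤ v`, so `x ≤ a ∈ V`. Hence `S ⊓ T ≤ V`.
-/

/-- Whitman's condition (W). -/
def WhitmanCondition (α : Type*) [Lattice α] : Prop :=
  ∀ s t u v : α, s ⊓ t ≤ u ⊔ v → s ≤ u ⊔ v ∨ t ≤ u ⊔ v ∨ s ⊓ t ≤ u ∨ s ⊓ t ≤ v

namespace WhitmanCondition

variable {L : Type*} [Lattice L]

theorem inf_mem_sup (hW : WhitmanCondition L) {U V : Order.Ideal L} {s t : L}
    (h : s ⊓ t ∈ U ⊔ V) : s ∈ U ⊔ V ∨ t ∈ U ⊔ V ∨ s ⊓ t ∈ U ∨ s ⊓ t ∈ V := by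
  obtain ⟨u, hu, v, hv, huv⟩ := Order.Ideal.mem_sup.mp h
  rcases hW s t u v huv with hs | ht | hst | hst
  · exact Or.inl (Order.Ideal.mem_sup.mpr ⟨u, hu, v, hv, hs⟩)
  · exact Or.inr (Or.inl (Order.Ideal.mem_sup.mpr ⟨u, hu, v, hv, ht⟩))
  · exact Or.inr (Or.inr (Or.inl (U.lower hst hu)))
  · exact Or.inr (Or.inr (Or.inr (V.lower hst hv)))

theorem mem_sup_or_mem_of_inf_le_sup (hW : WhitmanCondition L) {S T U V : Order.Ideal L}
    (hST : S ⊓ T ≤ U ⊔ V) {s t a : L} (hs : s ∈ S) (ht : t ∈ T) (ha : a ∈ S ⊓ T) :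
    s ∈ U ⊔ V ∨ t ∈ U ⊔ V ∨ a ∈ U ∨ a ∈ V := by
  rw [Order.Ideal.mem_inf] at ha
  have hsa : s ⊔ a ∈ S := S.sup_mem hs ha.1
  have hta : t ⊔ a ∈ T := T.sup_mem ht ha.2
  have hmem : (s ⊔ a) ⊓ (t ⊔ a) ∈ U ⊔ V :=
    hST (Order.Ideal.mem_inf.mpr ⟨S.lower inf_le_left hsa, T.lower inf_le_right hta⟩)
  have ha_le : a ≤ (s ⊔ a) ⊓ (t ⊔ a) := le_inf le_sup_right le_sup_right
  rcases hW.inf_mem_sup hmem with h | h | h | h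
  · exact Or.inl ((U ⊔ V).lower le_sup_left h)
  · exact Or.inr (Or.inl ((U ⊔ V).lower le_sup_left h))
  · exact Or.inr (Or.inr (Or.inl (U.lower ha_le h)))
  · exact Or.inr (Or.inr (Or.inr (V.lower ha_le h)))

end WhitmanCondition

/-- If a lattice `L` satisfies (W), then so does its ideal lattice `Id(L)`. -/
theorem idealLattice_whitman {L : Type*} [Lattice L] (hW : WhitmanCondition L) :
    WhitmanCondition (Order.Ideal L) := by
  intro S T U V hST
  by_contra! h
  obtain ⟨hS, hT, hU, hV⟩ := h
  obtain ⟨s, hs, hsUV⟩ := SetLike.not_le_iff_exists.mp hS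
  obtain ⟨t, ht, htUV⟩ := SetLike.not_le_iff_exists.mp hT
  obtain ⟨w, hw, hwU⟩ := SetLike.not_le_iff_exists.mp hU
  refine hV fun x hx => ?_
  have hwx : w ⊔ x ∈ S ⊓ T := (S ⊓ T).sup_mem hw hx
  rcases hW.mem_sup_or_mem_of_inf_le_sup hST hs ht hwx with h | h | h | h
  · exact absurd h hsUV
  · exact absurd h htUV
  · exact absurd (U.lower le_sup_left h) hwU
  · exact V.lower le_sup_right h
end

section
/- Let K be a lattice satisfying Whitman's condition (W), generated by elements that are both join prime and meet prime (e.g., a free lattice). Then the map κ : Id(K) → DM(K) defined by κ(I) = I^{uℓ} is a lattice homomorphism that fixes every DM-closed ideal; hence DM(K) is a retract of Id(K). -/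
/-- An ideal of a lattice: a nonempty downward-closed subset closed under binary joins. -/
def IsLatIdeal {L : Type*} [Lattice L] (I : Set L) : Prop :=
  I.Nonempty ∧ (∀ a b : L, a ≤ b → b ∈ I → a ∈ I) ∧ ∀ a ∈ I, ∀ b ∈ I, a ⊔ b ∈ I

/-- The join of two ideals (as sets): the downward closure of pairwise joins. -/
def idealJoin {L : Type*} [Lattice L] (I J : Set L) : Set L :=
  {w : L | ∃ i ∈ I, ∃ j ∈ J, w ≤ i ⊔ j}

/-- Dedekind–MacNeille closed subset: `C = C^{uℓ}`. -/
def DMClosed {L : Type*} [Lattice L] (C : Set L) : Prop :=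
  C = lowerBounds (upperBounds C)

/-- The Dedekind–MacNeille closure map `κ(I) = I^{uℓ}`. -/
def dmClosure {L : Type*} [Lattice L] (I : Set L) : Set L :=
  lowerBounds (upperBounds I)

/-!
`κ` is the closure operator of the Galois connection `upperBounds ⊣ lowerBounds`, so it sends ideals
to DM-closed ideals and fixes the DM-closed ones; the content is that it preserves meets and joins.
For meets one shows `(κ I ∩ κ J)ᵘ = (I ∩ J)ᵘ`, for joins that the ideal join of two DM-closed ideals
is DM-closed. Both are proved elementwise: the elements with the required property form a
sublattice containing the generators. On a generator, meet (resp. join) primeness does the work;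
Whitman's condition carries the property through joins (resp. meets), and the remaining operation
is routine. The two steps for joins are the order duals of those for meets, applied to the
inf-closed upper sets `Aᵘ` and `Bᵘ`.
-/

open Set

section

variable {K : Type*} [Lattice K]

lemma subset_dmClosure (I : Set K) : I ⊆ dmClosure I :=
  subset_lowerBounds_upperBounds I

lemma upperBounds_dmClosure (I : Set K) : upperBounds (dmClosure I) = upperBounds I :=
  gc_upperBounds_lowerBounds.l_u_l_eq_l I

lemma dmClosed_dmClosure (I : Set K) : DMClosed (dmClosure I) :=
  congrArg lowerBounds (upperBounds_dmClosure I).symm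

lemma DMClosed.isLowerSet {A : Set K} (hA : DMClosed A) : IsLowerSet A := by
  rw [hA]
  exact fun _ _ hba ha ↦ lowerBounds_mono_mem hba ha

lemma DMClosed.supClosed {A : Set K} (hA : DMClosed A) : SupClosed A := by
  rw [hA]
  exact fun _ ha _ hb _ hz ↦ sup_le (ha hz) (hb hz)

lemma DMClosed.inter {A B : Set K} (hA : DMClosed A) (hB : DMClosed B) : DMClosed (A ∩ B) :=
  (subset_lowerBounds_upperBounds _).antisymm <| subset_inter
    ((lowerBounds_mono_set (upperBounds_mono_set inter_subset_left)).trans hA.ge)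
    ((lowerBounds_mono_set (upperBounds_mono_set inter_subset_right)).trans hB.ge)

lemma IsLatIdeal.isLowerSet {I : Set K} (hI : IsLatIdeal I) : IsLowerSet I :=
  fun a b hba ha ↦ hI.2.1 b a hba ha

lemma IsLatIdeal.supClosed {I : Set K} (hI : IsLatIdeal I) : SupClosed I :=
  fun a ha b hb ↦ hI.2.2 a ha b hb

lemma isLatIdeal_dmClosure {I : Set K} (hI : I.Nonempty) : IsLatIdeal (dmClosure I) :=
  ⟨hI.mono (subset_dmClosure I), fun _ _ hab hb ↦ (dmClosed_dmClosure I).isLowerSet hab hb,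
    (dmClosed_dmClosure I).supClosed⟩

lemma isLowerSet_idealJoin (I J : Set K) : IsLowerSet (idealJoin I J) :=
  fun _ _ hba ⟨i, hi, j, hj, h⟩ ↦ ⟨i, hi, j, hj, hba.trans h⟩

lemma SupClosed.idealJoin {I J : Set K} (hI : SupClosed I) (hJ : SupClosed J) :
    SupClosed (idealJoin I J) := by
  rintro a ⟨i, hi, j, hj, ha⟩ b ⟨i', hi', j', hj', hb⟩
  refine ⟨i ⊔ i', hI hi hi', j ⊔ j', hJ hj hj', ?_⟩
  calc a ⊔ b ≤ (i ⊔ j) ⊔ (i' ⊔ j') := sup_le_sup ha hb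
    _ = (i ⊔ i') ⊔ (j ⊔ j') := sup_sup_sup_comm i j i' j'

lemma subset_idealJoin_left {I J : Set K} (hJ : J.Nonempty) : I ⊆ idealJoin I J :=
  fun i hi ↦ ⟨i, hi, hJ.some, hJ.some_mem, le_sup_left⟩

lemma subset_idealJoin_right {I J : Set K} (hI : I.Nonempty) : J ⊆ idealJoin I J :=
  fun j hj ↦ ⟨hI.some, hI.some_mem, j, hj, le_sup_right⟩

lemma upperBounds_idealJoin {I J : Set K} (hI : I.Nonempty) (hJ : J.Nonempty) :
    upperBounds (idealJoin I J) = upperBounds I ∩ upperBounds J := by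
  refine subset_antisymm (subset_inter (upperBounds_mono_set (subset_idealJoin_left hJ))
    (upperBounds_mono_set (subset_idealJoin_right hI))) ?_
  rintro z ⟨hzI, hzJ⟩ w ⟨i, hi, j, hj, hw⟩
  exact hw.trans (sup_le (hzI hi) (hzJ hj))

theorem Sublattice.forall_of_generating {X : Set K}
    (hX : ∀ S : Sublattice K, X ⊆ (S : Set K) → ∀ a : K, a ∈ S) {p : K → Prop}
    (mem : ∀ x ∈ X, p x) (sup : ∀ a b, p a → p b → p (a ⊔ b))
    (inf : ∀ a b, p a → p b → p (a ⊓ b)) (a : K) : p a :=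
  hX ⟨{a | p a}, fun a ha b hb ↦ sup a b ha hb, fun a ha b hb ↦ inf a b ha hb⟩ mem a

theorem WhitmanCondition.dual (hW : WhitmanCondition K) : WhitmanCondition Kᵒᵈ := by
  intro s t u v h
  rcases hW u v s t h with h' | h' | h' | h'
  · exact .inr (.inr (.inl h'))
  · exact .inr (.inr (.inr h'))
  · exact .inl h'
  · exact .inr (.inl h')

lemma isUpperSet_upperBounds (s : Set K) : IsUpperSet (upperBounds s) :=
  fun _ _ hab ha ↦ upperBounds_mono_mem hab ha

lemma infClosed_upperBounds (s : Set K) : InfClosed (upperBounds s) :=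
  fun _ ha _ hb _ hx ↦ le_inf (ha hx) (hb hx)

lemma SupClosed.mem_upperBounds_or_of_forall_le_or {s : Set K} (hs : SupClosed s) {a b : K}
    (h : ∀ v ∈ s, v ≤ a ∨ v ≤ b) : a ∈ upperBounds s ∨ b ∈ upperBounds s := by
  refine or_iff_not_imp_left.2 fun ha v hv ↦ ?_
  obtain ⟨u, hu, hua⟩ : ∃ u ∈ s, ¬u ≤ a := by simpa [mem_upperBounds] using ha
  exact le_sup_right.trans <| (h _ (hs hu hv)).resolve_left fun h' ↦ hua (le_sup_left.trans h')

theorem mem_upperBounds_or_of_mem_upperBounds_inter {y : K}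
    (hy : ∀ b c : K, b ⊓ c ≤ y → b ≤ y ∨ c ≤ y) {I J : Set K} (hI : IsLowerSet I)
    (hJ : IsLowerSet J) (h : y ∈ upperBounds (I ∩ J)) :
    y ∈ upperBounds I ∨ y ∈ upperBounds J := by
  refine or_iff_not_imp_left.2 fun hyI j hj ↦ ?_
  obtain ⟨i, hi, hiy⟩ : ∃ i ∈ I, ¬i ≤ y := by simpa [mem_upperBounds] using hyI
  exact (hy i j (h ⟨hI inf_le_left hi, hJ inf_le_right hj⟩)).resolve_left hiy

theorem mem_lowerBounds_or_of_mem_lowerBounds_inter {x : K}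
    (hx : ∀ b c : K, x ≤ b ⊔ c → x ≤ b ∨ x ≤ c) {P Q : Set K} (hP : IsUpperSet P)
    (hQ : IsUpperSet Q) (h : x ∈ lowerBounds (P ∩ Q)) :
    x ∈ lowerBounds P ∨ x ∈ lowerBounds Q :=
  mem_upperBounds_or_of_mem_upperBounds_inter (K := Kᵒᵈ) hx hP.toDual hQ.toDual h

theorem WhitmanCondition.sup_mem_upperBounds_or (hW : WhitmanCondition K) {I J : Set K}
    (hI : IsLowerSet I) (hI' : SupClosed I) (hJ : IsLowerSet J) (hJ' : SupClosed J)
    {w₁ w₂ : K} (h : w₁ ⊔ w₂ ∈ upperBounds (I ∩ J)) :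
    w₁ ⊔ w₂ ∈ upperBounds I ∨ w₁ ⊔ w₂ ∈ upperBounds J ∨
      w₁ ∈ upperBounds (I ∩ J) ∨ w₂ ∈ upperBounds (I ∩ J) := by
  by_cases hwI : w₁ ⊔ w₂ ∈ upperBounds I
  · exact .inl hwI
  by_cases hwJ : w₁ ⊔ w₂ ∈ upperBounds J
  · exact .inr (.inl hwJ)
  obtain ⟨i, hi, hiw⟩ : ∃ i ∈ I, ¬i ≤ w₁ ⊔ w₂ := by simpa [mem_upperBounds] using hwI
  obtain ⟨j, hj, hjw⟩ : ∃ j ∈ J, ¬j ≤ w₁ ⊔ w₂ := by simpa [mem_upperBounds] using hwJ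
  refine .inr (.inr ((hI'.inter hJ').mem_upperBounds_or_of_forall_le_or fun v hv ↦ ?_))
  -- Apply (W) to `(v ⊔ i) ⊓ (v ⊔ j) ≤ w₁ ⊔ w₂`; `i` and `j` rule out the first two alternatives.
  have hm : (v ⊔ i) ⊓ (v ⊔ j) ∈ I ∩ J :=
    ⟨hI inf_le_left (hI' hv.1 hi), hJ inf_le_right (hJ' hv.2 hj)⟩
  have hv : v ≤ (v ⊔ i) ⊓ (v ⊔ j) := le_inf le_sup_left le_sup_left
  rcases hW _ _ _ _ (h hm) with h' | h' | h' | h'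
  · exact absurd (le_sup_right.trans h') hiw
  · exact absurd (le_sup_right.trans h') hjw
  · exact .inl (hv.trans h')
  · exact .inr (hv.trans h')

theorem WhitmanCondition.inf_mem_lowerBounds_or (hW : WhitmanCondition K) {P Q : Set K}
    (hP : IsUpperSet P) (hP' : InfClosed P) (hQ : IsUpperSet Q) (hQ' : InfClosed Q)
    {c₁ c₂ : K} (h : c₁ ⊓ c₂ ∈ lowerBounds (P ∩ Q)) :
    c₁ ⊓ c₂ ∈ lowerBounds P ∨ c₁ ⊓ c₂ ∈ lowerBounds Q ∨
      c₁ ∈ lowerBounds (P ∩ Q) ∨ c₂ ∈ lowerBounds (P ∩ Q) :=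
  hW.dual.sup_mem_upperBounds_or hP.toDual hP'.dual hQ.toDual hQ'.dual h

theorem upperBounds_dmClosure_inter_dmClosure (hW : WhitmanCondition K) {X : Set K}
    (hXmp : ∀ x ∈ X, ∀ b c : K, b ⊓ c ≤ x → b ≤ x ∨ c ≤ x)
    (hXgen : ∀ S : Sublattice K, X ⊆ (S : Set K) → ∀ a : K, a ∈ S) {I J : Set K}
    (hI : IsLowerSet I) (hI' : SupClosed I) (hJ : IsLowerSet J) (hJ' : SupClosed J) :
    upperBounds (dmClosure I ∩ dmClosure J) = upperBounds (I ∩ J) := by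
  have hunion : upperBounds I ∪ upperBounds J ⊆ upperBounds (dmClosure I ∩ dmClosure J) := by
    simpa only [upperBounds_dmClosure] using
      union_upperBounds_subset_upperBounds_inter (s := dmClosure I) (t := dmClosure J)
  refine subset_antisymm
    (upperBounds_mono_set (inter_subset_inter (subset_dmClosure I) (subset_dmClosure J))) fun w ↦ ?_
  refine Sublattice.forall_of_generating hXgen
    (p := fun w ↦ w ∈ upperBounds (I ∩ J) → w ∈ upperBounds (dmClosure I ∩ dmClosure J)) ?_ ?_ ?_ w
  · exact fun y hy h ↦ hunion (mem_upperBounds_or_of_mem_upperBounds_inter (hXmp y hy) hI hJ h)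
  · intro w₁ w₂ h₁ h₂ h
    rcases hW.sup_mem_upperBounds_or hI hI' hJ hJ' h with h' | h' | h' | h'
    · exact hunion (.inl h')
    · exact hunion (.inr h')
    · exact upperBounds_mono_mem le_sup_left (h₁ h')
    · exact upperBounds_mono_mem le_sup_right (h₂ h')
  · intro w₁ w₂ h₁ h₂ h
    exact infClosed_upperBounds _ (h₁ (upperBounds_mono_mem inf_le_left h))
      (h₂ (upperBounds_mono_mem inf_le_right h))

theorem dmClosed_idealJoin (hW : WhitmanCondition K) {X : Set K}
    (hXjp : ∀ x ∈ X, ∀ b c : K, x ≤ b ⊔ c → x ≤ b ∨ x ≤ c)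
    (hXgen : ∀ S : Sublattice K, X ⊆ (S : Set K) → ∀ a : K, a ∈ S) {A B : Set K}
    (hA : DMClosed A) (hB : DMClosed B) (hA₀ : A.Nonempty) (hB₀ : B.Nonempty) :
    DMClosed (idealJoin A B) := by
  refine (subset_lowerBounds_upperBounds _).antisymm fun c ↦ ?_
  rw [upperBounds_idealJoin hA₀ hB₀]
  refine Sublattice.forall_of_generating hXgen
    (p := fun c ↦ c ∈ lowerBounds (upperBounds A ∩ upperBounds B) → c ∈ idealJoin A B) ?_ ?_ ?_ c
  · intro x hx h
    rcases mem_lowerBounds_or_of_mem_lowerBounds_inter (hXjp x hx) (isUpperSet_upperBounds A)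
      (isUpperSet_upperBounds B) h with h' | h'
    · exact subset_idealJoin_left hB₀ (hA.ge h')
    · exact subset_idealJoin_right hA₀ (hB.ge h')
  · intro c₁ c₂ h₁ h₂ h
    exact hA.supClosed.idealJoin hB.supClosed (h₁ (lowerBounds_mono_mem le_sup_left h))
      (h₂ (lowerBounds_mono_mem le_sup_right h))
  · intro c₁ c₂ h₁ h₂ h
    rcases hW.inf_mem_lowerBounds_or (isUpperSet_upperBounds A) (infClosed_upperBounds A)
      (isUpperSet_upperBounds B) (infClosed_upperBounds B) h with h' | h' | h' | h'
    · exact subset_idealJoin_left hB₀ (hA.ge h')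
    · exact subset_idealJoin_right hA₀ (hB.ge h')
    · exact isLowerSet_idealJoin A B inf_le_left (h₁ h')
    · exact isLowerSet_idealJoin A B inf_le_right (h₂ h')

end

/-- Let `K` satisfy (W) and be generated by doubly prime elements (e.g. a free
lattice). Then `κ(I) = I^{uℓ}` maps ideals to DM-closed ideals, is a lattice
homomorphism from `Id(K)` to `DM(K)`, and fixes every DM-closed ideal; hence
`DM(K)` is a retract of `Id(K)`. -/
theorem dm_retract_of_ideals {K : Type*} [Lattice K]
    (hW : WhitmanCondition K) (X : Set K)
    (hXjp : ∀ x ∈ X, ∀ b c : K, x ≤ b ⊔ c → x ≤ b ∨ x ≤ c)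
    (hXmp : ∀ x ∈ X, ∀ b c : K, b ⊓ c ≤ x → b ≤ x ∨ c ≤ x)
    (hXgen : ∀ S : Sublattice K, X ⊆ (S : Set K) → ∀ a : K, a ∈ S) :
    (∀ I : Set K, IsLatIdeal I → IsLatIdeal (dmClosure I) ∧ DMClosed (dmClosure I)) ∧
    (∀ I J : Set K, IsLatIdeal I → IsLatIdeal J →
        dmClosure (idealJoin I J) = idealJoin (dmClosure I) (dmClosure J) ∧
        dmClosure (I ∩ J) = dmClosure I ∩ dmClosure J) ∧
    (∀ I : Set K, IsLatIdeal I → DMClosed I → dmClosure I = I) := by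
  refine ⟨fun I hI ↦ ⟨isLatIdeal_dmClosure hI.1, dmClosed_dmClosure I⟩,
    fun I J hI hJ ↦ ⟨?_, ?_⟩, fun I _ hI ↦ hI.symm⟩
  · have hκI₀ := hI.1.mono (subset_dmClosure I)
    have hκJ₀ := hJ.1.mono (subset_dmClosure J)
    have hκ := dmClosed_idealJoin hW hXjp hXgen (dmClosed_dmClosure I) (dmClosed_dmClosure J)
      hκI₀ hκJ₀
    calc dmClosure (idealJoin I J)
        = dmClosure (idealJoin (dmClosure I) (dmClosure J)) := congrArg lowerBounds <| by
          rw [upperBounds_idealJoin hI.1 hJ.1, upperBounds_idealJoin hκI₀ hκJ₀,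
            upperBounds_dmClosure, upperBounds_dmClosure]
      _ = idealJoin (dmClosure I) (dmClosure J) := hκ.symm
  · calc dmClosure (I ∩ J) = lowerBounds (upperBounds (dmClosure I ∩ dmClosure J)) := by
          rw [upperBounds_dmClosure_inter_dmClosure hW hXmp hXgen hI.isLowerSet hI.supClosed
            hJ.isLowerSet hJ.supClosed]
          rfl
      _ = dmClosure I ∩ dmClosure J := ((dmClosed_dmClosure I).inter (dmClosed_dmClosure J)).symm
end

section
/- The ideal lattice Id(F₃) of the free lattice on three generators x, y, z fails the meet semidistributive law SD∧: there exist ideals X, Y, Z with X ∧ Y = X ∧ Z but X ∧ (Y ∨ Z) strictly larger. Specifically, with y₀ = y, z₀ = z, y_{k+1} = y ∨ (x ∧ z_k), z_{k+1} = z ∨ (x ∧ y_k), and X = ↓x, Y = ⋃_k ↓y_k, Z = ⋃_k ↓z_k, one has X ∧ Y = X ∧ Z < X ∧ (Y ∨ Z), since x ∧ (y ∨ z) lies in X ∧ (Y ∨ Z) but not in X ∧ Y. -/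
/-!
Map `F₃` onto the diamond `M₃` by `x ↦ a`, `y ↦ b`, `z ↦ c`. Since any two atoms of `M₃` meet
in `⊥`, the recursion fixes `yₖ ↦ b` and `zₖ ↦ c`, while `x ∧ (y ∨ z) ↦ a ∧ ⊤ = a ≰ b`; so
`x ∧ (y ∨ z)` lies below no `yₖ`. The equality `X ∧ Y = X ∧ Z` holds in any lattice: any
`w ≤ x, yₖ` lies below `x ∧ yₖ ≤ zₖ₊₁`.
-/

/-- A family `g : ι → F` freely generates the lattice `F`. -/
def IsFreeLattice {F : Type*} [Lattice F] {ι : Type*} (g : ι → F) : Prop :=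
  ∀ {L : Type*} [Lattice L] (f : ι → L), ∃! h : LatticeHom F L, ∀ i, h (g i) = f i

inductive M3 : Type
  | bot | a | b | c | top
  deriving DecidableEq

namespace M3

instance : Fintype M3 :=
  ⟨{bot, a, b, c, top}, fun p => by cases p <;> simp⟩

instance : LE M3 := ⟨fun p q => p = bot ∨ q = top ∨ p = q⟩

instance : DecidableRel (α := M3) (· ≤ ·) := fun _ _ => inferInstanceAs (Decidable (_ ∨ _ ∨ _))

instance : Lattice M3 where
  sup p q := if p ≤ q then q else if q ≤ p then p else top
  inf p q := if p ≤ q then p else if q ≤ p then q else bot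
  le_refl := by decide
  le_trans := by decide
  le_antisymm := by decide
  le_sup_left := by decide
  le_sup_right := by decide
  sup_le := by decide
  inf_le_left := by decide
  inf_le_right := by decide
  le_inf := by decide

end M3

section AlternatingSequences

variable {F : Type*} [Lattice F] {x y z : F} {Y Z : ℕ → F}

theorem Iic_inter_iUnion_Iic_subset (hZs : ∀ k, Z (k + 1) = z ⊔ (x ⊓ Y k)) :
    {w : F | w ≤ x} ∩ {w : F | ∃ k, w ≤ Y k} ⊆ {w : F | w ≤ x} ∩ {w : F | ∃ k, w ≤ Z k} := by
  rintro w ⟨hwx, k, hwY⟩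
  exact ⟨hwx, k + 1, hZs k ▸ le_sup_of_le_right (le_inf hwx hwY)⟩

theorem map_alternating_eq {L : Type*} [Lattice L] (f : LatticeHom F L)
    (hY0 : Y 0 = y) (hZ0 : Z 0 = z)
    (hYs : ∀ k, Y (k + 1) = y ⊔ (x ⊓ Z k)) (hZs : ∀ k, Z (k + 1) = z ⊔ (x ⊓ Y k))
    (hxz : f x ⊓ f z ≤ f y) (hxy : f x ⊓ f y ≤ f z) :
    ∀ k, f (Y k) = f y ∧ f (Z k) = f z
  | 0 => ⟨by rw [hY0], by rw [hZ0]⟩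
  | k + 1 => by
    obtain ⟨hY, hZ⟩ := map_alternating_eq f hY0 hZ0 hYs hZs hxz hxy k
    rw [hYs, hZs, map_sup, map_sup, map_inf, map_inf, hY, hZ]
    exact ⟨sup_eq_left.mpr hxz, sup_eq_left.mpr hxy⟩

theorem inf_sup_not_le_alternating {L : Type*} [Lattice L] (f : LatticeHom F L)
    (hY0 : Y 0 = y) (hZ0 : Z 0 = z)
    (hYs : ∀ k, Y (k + 1) = y ⊔ (x ⊓ Z k)) (hZs : ∀ k, Z (k + 1) = z ⊔ (x ⊓ Y k))
    (hxz : f x ⊓ f z ≤ f y) (hxy : f x ⊓ f y ≤ f z) (hsep : ¬f x ⊓ (f y ⊔ f z) ≤ f y)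
    (k : ℕ) : ¬x ⊓ (y ⊔ z) ≤ Y k := fun hle => by
  have := OrderHomClass.mono f hle
  simp only [map_inf, map_sup,
    (map_alternating_eq f hY0 hZ0 hYs hZs hxz hxy k).1] at this
  exact hsep this

end AlternatingSequences

open M3 in
/-- The ideal lattice of the free lattice `F₃` on `x, y, z` fails `SD∧`: with
`y₀ = y`, `z₀ = z`, `y_{k+1} = y ∨ (x ∧ z_k)`, `z_{k+1} = z ∨ (x ∧ y_k)`, and the
ideals `X = ↓x`, `Y = ⋃ₖ ↓y_k`, `Z = ⋃ₖ ↓z_k`, one has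
`X ∧ Y = X ∧ Z < X ∧ (Y ∨ Z)`; indeed `x ∧ (y ∨ z)` lies in `X ∧ (Y ∨ Z)` but not in
`X ∧ Y`. -/
theorem ideal_lattice_fails_SDmeet {F : Type*} [Lattice F] (g : Fin 3 → F)
    (hfree : IsFreeLattice g)
    (x y z : F) (hx : x = g 0) (hy : y = g 1) (hz : z = g 2)
    (Y Z : ℕ → F) (hY0 : Y 0 = y) (hZ0 : Z 0 = z)
    (hYs : ∀ k, Y (k + 1) = y ⊔ (x ⊓ Z k)) (hZs : ∀ k, Z (k + 1) = z ⊔ (x ⊓ Y k)) :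
    ({w : F | w ≤ x} ∩ {w : F | ∃ k, w ≤ Y k} = {w : F | w ≤ x} ∩ {w : F | ∃ k, w ≤ Z k}) ∧
    ({w : F | w ≤ x} ∩ {w : F | ∃ k, w ≤ Y k}
        ⊂ {w : F | w ≤ x} ∩ {w : F | ∃ j k, w ≤ Y j ⊔ Z k}) ∧
    (x ⊓ (y ⊔ z) ∈ {w : F | w ≤ x} ∩ {w : F | ∃ j k, w ≤ Y j ⊔ Z k}) ∧
    (x ⊓ (y ⊔ z) ∉ {w : F | w ≤ x} ∩ {w : F | ∃ k, w ≤ Y k}) := by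
  obtain ⟨f, hf, -⟩ := hfree (L := ULift M3) ![.up a, .up b, .up c]
  have hfx : f x = .up a := hx ▸ hf 0
  have hfy : f y = .up b := hy ▸ hf 1
  have hfz : f z = .up c := hz ▸ hf 2
  have hnotin : x ⊓ (y ⊔ z) ∉ {w : F | w ≤ x} ∩ {w : F | ∃ k, w ≤ Y k} := by
    rintro ⟨-, k, hk⟩
    refine inf_sup_not_le_alternating f hY0 hZ0 hYs hZs ?_ ?_ ?_ k hk <;>
      simp only [hfx, hfy, hfz, ← ULift.up_sup, ← ULift.up_inf, ULift.up_le] <;> decide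
  have hmem : x ⊓ (y ⊔ z) ∈ {w : F | w ≤ x} ∩ {w : F | ∃ j k, w ≤ Y j ⊔ Z k} :=
    ⟨inf_le_left, 0, 0, hY0 ▸ hZ0 ▸ inf_le_right⟩
  have hsub : {w : F | w ≤ x} ∩ {w : F | ∃ k, w ≤ Y k}
      ⊆ {w : F | w ≤ x} ∩ {w : F | ∃ j k, w ≤ Y j ⊔ Z k} :=
    fun w ⟨hwx, k, hwY⟩ => ⟨hwx, k, 0, le_sup_of_le_left hwY⟩
  exact ⟨(Iic_inter_iUnion_Iic_subset hZs).antisymm (Iic_inter_iUnion_Iic_subset hYs),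
    (Set.ssubset_iff_of_subset hsub).mpr ⟨_, hmem, hnotin⟩, hmem, hnotin⟩
end

section
/- In the free lattice F₄ on generators x₁, x₂, x₃, x₄, there do not exist elements z₁, z₂, z₃ with z₁ ∨ z₂ ∨ z₃ = x₁ ∨ x₂ ∨ x₃ ∨ x₄ and z₁ ∧ z₂ ∧ z₃ = x₁ ∧ x₂ ∧ x₃ ∧ x₄ such that z₁ = x₁ (say) and x₂, x₃, x₄ all lie in the interval K = [z₁z₂ ∨ z₁z₃ ∨ z₂z₃, (z₁∨z₂)(z₁∨z₃)(z₂∨z₃)]. -/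
/-!
In a distributive lattice the median identity `(a ⊔ b) ⊓ (a ⊔ c) ⊓ (b ⊔ c) = a ⊓ b ⊔ a ⊓ c ⊔ b ⊓ c`
holds, so the interval `K` spanned by `z₁, z₂, z₃` collapses to a point under every lattice
homomorphism into a distributive lattice. The generators `x₂` and `x₃` would both lie in `K`, but
the homomorphism to the two-element chain sending `x₃` to the top and every other generator to
the bottom separates them.
-/

theorem sup_inf_sup_inf_sup_eq {α : Type*} [DistribLattice α] (a b c : α) :
    (a ⊔ b) ⊓ (a ⊔ c) ⊓ (b ⊔ c) = a ⊓ b ⊔ a ⊓ c ⊔ b ⊓ c := by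
  rw [← sup_inf_left, inf_sup_right, inf_sup_left, inf_sup_left, inf_right_comm, inf_idem,
    inf_assoc, inf_idem, sup_idem]

theorem LatticeHom.map_le_map_of_le_of_le_median {F L : Type*} [Lattice F] [DistribLattice L]
    (f : LatticeHom F L) {a b c u v : F} (hu : a ⊓ b ⊔ a ⊓ c ⊔ b ⊓ c ≤ u)
    (hv : v ≤ (a ⊔ b) ⊓ (a ⊔ c) ⊓ (b ⊔ c)) : f v ≤ f u :=
  calc f v ≤ f ((a ⊔ b) ⊓ (a ⊔ c) ⊓ (b ⊔ c)) := OrderHomClass.mono f hv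
    _ = f (a ⊓ b ⊔ a ⊓ c ⊔ b ⊓ c) := by simp only [map_sup, map_inf, sup_inf_sup_inf_sup_eq]
    _ ≤ f u := OrderHomClass.mono f hu

theorem no_free_generators_in_K_interval_general {F : Type*} [Lattice F] (g : Fin 4 → F)
    (hfree : IsFreeLattice g)
    (x₁ x₂ x₃ x₄ : F) (h2 : x₂ = g 1) (h3 : x₃ = g 2) :
    ¬ ∃ z₁ z₂ z₃ : F,
        z₁ ⊔ z₂ ⊔ z₃ = x₁ ⊔ x₂ ⊔ x₃ ⊔ x₄ ∧
        z₁ ⊓ z₂ ⊓ z₃ = x₁ ⊓ x₂ ⊓ x₃ ⊓ x₄ ∧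
        z₁ = x₁ ∧
        (∀ w ∈ ({x₂, x₃, x₄} : Set F),
          z₁ ⊓ z₂ ⊔ z₁ ⊓ z₃ ⊔ z₂ ⊓ z₃ ≤ w ∧
          w ≤ (z₁ ⊔ z₂) ⊓ (z₁ ⊔ z₃) ⊓ (z₂ ⊔ z₃)) := by
  rintro ⟨z₁, z₂, z₃, -, -, -, hK⟩
  obtain ⟨f, hf, -⟩ := hfree fun i => ULift.up (decide (i = 2))
  have hle := f.map_le_map_of_le_of_le_median (hK x₂ (by simp)).1 (hK x₃ (by simp)).2
  rw [h2, h3, hf, hf] at hle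
  exact absurd hle (by decide)

/-- In the free lattice `F₄` on generators `x₁, x₂, x₃, x₄`, there are no elements
`z₁, z₂, z₃` with `z₁ ∨ z₂ ∨ z₃ = x₁ ∨ x₂ ∨ x₃ ∨ x₄` and
`z₁ ∧ z₂ ∧ z₃ = x₁ ∧ x₂ ∧ x₃ ∧ x₄` such that `z₁ = x₁` and `x₂, x₃, x₄` all lie in
the interval `K = [z₁z₂ ∨ z₁z₃ ∨ z₂z₃, (z₁∨z₂)(z₁∨z₃)(z₂∨z₃)]`. -/
theorem no_free_generators_in_K_interval {F : Type*} [Lattice F] (g : Fin 4 → F)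
    (hfree : IsFreeLattice g)
    (x₁ x₂ x₃ x₄ : F) (h1 : x₁ = g 0) (h2 : x₂ = g 1) (h3 : x₃ = g 2) (h4 : x₄ = g 3) :
    ¬ ∃ z₁ z₂ z₃ : F,
        z₁ ⊔ z₂ ⊔ z₃ = x₁ ⊔ x₂ ⊔ x₃ ⊔ x₄ ∧
        z₁ ⊓ z₂ ⊓ z₃ = x₁ ⊓ x₂ ⊓ x₃ ⊓ x₄ ∧
        z₁ = x₁ ∧
        (∀ w ∈ ({x₂, x₃, x₄} : Set F),
          z₁ ⊓ z₂ ⊔ z₁ ⊓ z₃ ⊔ z₂ ⊓ z₃ ≤ w ∧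
          w ≤ (z₁ ⊔ z₂) ⊓ (z₁ ⊔ z₃) ⊓ (z₂ ⊔ z₃)) :=
  no_free_generators_in_K_interval_general g hfree x₁ x₂ x₃ x₄ h2 h3
end
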